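/- Fix 0 < β < α ≤ 1 and δ > 0. The map G_δ : C([0,1],ℝ) × C_0^{α-Hld}([0,1],ℝ) → C_0^{β-Hld}([0,1],ℝ) is almost compact: whenever (a(n), x(n)) → (a, x) in C([0,1]) × C_0^{α-Hld}([0,1]), there exist a subsequence (a(n_k), x(n_k)) and z ∈ C_0^{β-Hld}([0,1]) such that G_δ(a(n_k), x(n_k)) → z in β-Hölder norm. -/

import Mathlib

open Set Filter

/-- `x` satisfies a `β`-Hölder bound with constant `C` on `[0,1]`. -/
def HolderWithOn (C β : ℝ) (x : ℝ → ℝ) : Prop :=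
  ∀ s ∈ Icc (0:ℝ) 1, ∀ t ∈ Icc (0:ℝ) 1, |x t - x s| ≤ C * |t - s| ^ β

/-- `x ∈ C_0^{β-Hld}([0,1])`: `x` is `β`-Hölder and `w_β(δ,x) → 0` as `δ → 0`. -/
def MemC0Holder (β : ℝ) (x : ℝ → ℝ) : Prop :=
  (∃ C, HolderWithOn C β x) ∧
  ∀ ε > 0, ∃ δ > 0, ∀ s ∈ Icc (0:ℝ) 1, ∀ t ∈ Icc (0:ℝ) 1,
    |t - s| ≤ δ → |x t - x s| ≤ ε * |t - s| ^ β

/-- Convergence `y n → z` in the `β`-Hölder norm on `[0,1]`. -/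
def TendstoHolder (β : ℝ) (y : ℕ → ℝ → ℝ) (z : ℝ → ℝ) : Prop :=
  Tendsto (fun n => y n 0) atTop (nhds (z 0)) ∧
  ∀ ε > 0, ∃ N, ∀ n ≥ N, ∀ s ∈ Icc (0:ℝ) 1, ∀ t ∈ Icc (0:ℝ) 1,
    |(y n t - z t) - (y n s - z s)| ≤ ε * |t - s| ^ β

/-- The deterministic exit times of `a` at level `δ`, capped at `1`. -/
noncomputable def exitTimes (δ : ℝ) (a : ℝ → ℝ) : ℕ → ℝ
  | 0 => 0
  | k + 1 =>
      sInf ({t : ℝ | exitTimes δ a k < t ∧ δ < |a t - a (exitTimes δ a k)|} ∪ {1})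

/-- `G_δ(a,x)_t = Σ_{k≥1} a_{τ_{k-1}(a)} (x_{t ∧ τ_k(a)} - x_{t ∧ τ_{k-1}(a)})`. -/
noncomputable def Gmap (δ : ℝ) (a x : ℝ → ℝ) (t : ℝ) : ℝ :=
  ∑' k : ℕ,
    a (exitTimes δ a k) * (x (min t (exitTimes δ a (k + 1))) - x (min t (exitTimes δ a k)))

open Topology

/-!
Uniform convergence of the continuous `A n` to `a` gives them a common modulus of continuity, so
consecutive exit times before `1` are uniformly separated and, eventually, every `A n` has at most
`K` exit times. Then `G_δ(A n, X n)` is a sum of `K` increments of `X n`, uniformly `α`-Hölder.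
Along a subsequence on which these `K` exit times converge, the finite sums converge uniformly to
the analogous sum `z` built from `a`, `x` and the limit times, and uniform convergence together
with a uniform `α`-Hölder bound is convergence in `β`-Hölder norm for `β < α`.
-/

namespace HolderWithOn

variable {C D α β : ℝ} {f g : ℝ → ℝ}

lemma nonneg (h : HolderWithOn C α f) : 0 ≤ C := by
  have h01 := h 0 (left_mem_Icc.2 zero_le_one) 1 (right_mem_Icc.2 zero_le_one)
  norm_num at h01
  linarith [abs_nonneg (f 1 - f 0)]

lemma mono (h : HolderWithOn C α f) (hCD : C ≤ D) : HolderWithOn D α f := fun s hs t ht =>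
  (h s hs t ht).trans (mul_le_mul_of_nonneg_right hCD (Real.rpow_nonneg (abs_nonneg _) _))

lemma add (hf : HolderWithOn C α f) (hg : HolderWithOn D α g) :
    HolderWithOn (C + D) α (fun t => f t + g t) := fun s hs t ht => by
  calc |f t + g t - (f s + g s)| ≤ |f t - f s| + |g t - g s| := by
        rw [add_sub_add_comm]; exact abs_add_le _ _
    _ ≤ (C + D) * |t - s| ^ α := by linarith [hf s hs t ht, hg s hs t ht]

lemma sub (hf : HolderWithOn C α f) (hg : HolderWithOn D α g) :
    HolderWithOn (C + D) α (fun t => f t - g t) := fun s hs t ht => by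
  calc |f t - g t - (f s - g s)| ≤ |f t - f s| + |g t - g s| := by
        rw [sub_sub_sub_comm]; exact abs_sub _ _
    _ ≤ (C + D) * |t - s| ^ α := by linarith [hf s hs t ht, hg s hs t ht]

/-- On `[0,1]` all distances are at most `1`, so a smaller exponent gives a weaker condition. -/
lemma of_exponent_le (h : HolderWithOn C α f) (hβ : 0 ≤ β) (hβα : β ≤ α) :
    HolderWithOn C β f := fun s hs t ht => by
  have hts : |t - s| ≤ 1 := by rw [abs_le]; constructor <;> linarith [hs.1, hs.2, ht.1, ht.2]
  exact (h s hs t ht).trans <| mul_le_mul_of_nonneg_left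
    (Real.rpow_le_rpow_of_exponent_ge' (abs_nonneg _) hts hβ hβα) h.nonneg

lemma continuousOn (h : HolderWithOn C α f) (hα : 0 < α) : ContinuousOn f (Icc 0 1) := by
  intro t₀ ht₀
  have hbound : Tendsto (fun t => C * |t - t₀| ^ α) (𝓝[Icc 0 1] t₀) (𝓝 0) := by
    have hcont : Continuous fun t : ℝ => C * |t - t₀| ^ α :=
      continuous_const.mul <| (continuous_abs.comp (continuous_id.sub continuous_const)).rpow_const
        fun _ => Or.inr hα.le
    simpa [Real.zero_rpow hα.ne'] using (hcont.tendsto t₀).mono_left nhdsWithin_le_nhds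
  rw [ContinuousWithinAt, tendsto_iff_norm_sub_tendsto_zero]
  exact squeeze_zero' (.of_forall fun _ => norm_nonneg _)
    (eventually_nhdsWithin_of_forall fun t ht => h t₀ ht₀ t ht) hbound

end HolderWithOn

lemma exists_mul_rpow_le_mul_rpow {C α β ε : ℝ} (hC : 0 ≤ C) (hβα : β < α) (hα : 0 < α)
    (hε : 0 < ε) : ∃ ρ > 0, ∀ r, 0 ≤ r → r ≤ ρ → C * r ^ α ≤ ε * r ^ β := by
  have hαβ : 0 < α - β := sub_pos.2 hβα
  have hq : 0 < ε / (C + 1) := by positivity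
  refine ⟨(ε / (C + 1)) ^ (α - β)⁻¹, by positivity, fun r hr hrρ => ?_⟩
  have hsmall : r ^ (α - β) ≤ ε / (C + 1) := by
    simpa [Real.rpow_inv_rpow hq.le hαβ.ne'] using Real.rpow_le_rpow hr hrρ hαβ.le
  have hCε : C * (ε / (C + 1)) ≤ ε := by
    rw [mul_div_assoc', div_le_iff₀ (by linarith)]; nlinarith
  calc C * r ^ α = C * r ^ (α - β) * r ^ β := by
        rw [mul_assoc, ← Real.rpow_add' hr (by linarith)]; ring_nf
    _ ≤ ε * r ^ β := mul_le_mul_of_nonneg_right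
        ((mul_le_mul_of_nonneg_left hsmall hC).trans hCε) (Real.rpow_nonneg hr _)

lemma MemC0Holder.of_holderWithOn {C α β : ℝ} {f : ℝ → ℝ} (h : HolderWithOn C α f)
    (hβ : 0 ≤ β) (hβα : β < α) : MemC0Holder β f := by
  refine ⟨⟨C, h.of_exponent_le hβ hβα.le⟩, fun ε hε => ?_⟩
  obtain ⟨ρ, hρ, hρC⟩ := exists_mul_rpow_le_mul_rpow h.nonneg hβα (hβ.trans_lt hβα) hε
  exact ⟨ρ, hρ, fun s hs t ht hts => (h s hs t ht).trans (hρC _ (abs_nonneg _) hts)⟩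

namespace TendstoHolder

variable {C α : ℝ} {y : ℕ → ℝ → ℝ} {z : ℝ → ℝ}

lemma tendstoUniformlyOn (h : TendstoHolder α y z) (hα : 0 ≤ α) :
    TendstoUniformlyOn y z atTop (Icc 0 1) := by
  refine Metric.tendstoUniformlyOn_iff.2 fun ε hε => ?_
  obtain ⟨N, hN⟩ := h.2 (ε / 2) (half_pos hε)
  filter_upwards [Metric.tendsto_nhds.1 h.1 (ε / 2) (half_pos hε), eventually_ge_atTop N]
    with n hn0 hnN u hu
  have hu1 : |u - 0| ^ α ≤ 1 :=
    Real.rpow_le_one (abs_nonneg _) (by simpa [abs_of_nonneg hu.1] using hu.2) hα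
  have hdiff := hN n hnN 0 (left_mem_Icc.2 zero_le_one) u hu
  rw [Real.dist_eq] at hn0
  rw [Real.dist_eq, abs_sub_comm]
  calc |y n u - z u| ≤ |(y n u - z u) - (y n 0 - z 0)| + |y n 0 - z 0| := by
        simpa using abs_add_le ((y n u - z u) - (y n 0 - z 0)) (y n 0 - z 0)
    _ < ε := by nlinarith

lemma eventually_holderWithOn (h : TendstoHolder α y z) (hz : HolderWithOn C α z) :
    ∀ᶠ n in atTop, HolderWithOn (1 + C) α (y n) := by
  obtain ⟨N, hN⟩ := h.2 1 one_pos
  filter_upwards [eventually_ge_atTop N] with n hn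
  have hdiff : HolderWithOn 1 α (fun t => y n t - z t) := hN n hn
  simpa using hdiff.add hz

end TendstoHolder

/-- Small increments are controlled by the `α`-Hölder bound, large ones by the sup norm. -/
lemma tendstoHolder_of_tendstoUniformlyOn {C α β : ℝ} {y : ℕ → ℝ → ℝ} {z : ℝ → ℝ}
    (hβ : 0 ≤ β) (hβα : β < α) (hy : ∀ᶠ n in atTop, HolderWithOn C α (y n))
    (hz : HolderWithOn C α z) (hu : TendstoUniformlyOn y z atTop (Icc 0 1)) :
    TendstoHolder β y z := by
  refine ⟨hu.tendsto_at (left_mem_Icc.2 zero_le_one), fun ε hε => ?_⟩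
  obtain ⟨ρ, hρ, hρC⟩ :=
    exists_mul_rpow_le_mul_rpow (add_nonneg hz.nonneg hz.nonneg) hβα (hβ.trans_lt hβα) hε
  have hsup : 0 < ε * ρ ^ β / 2 := by positivity
  obtain ⟨N, hN⟩ := eventually_atTop.1 <| hy.and (Metric.tendstoUniformlyOn_iff.1 hu _ hsup)
  refine ⟨N, fun n hn s hs t ht => ?_⟩
  obtain ⟨hyn, hclose⟩ := hN n hn
  rcases le_or_gt |t - s| ρ with hts | hts
  · exact ((hyn.sub hz) s hs t ht).trans (hρC _ (abs_nonneg _) hts)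
  · have h1 := hclose t ht
    have h2 := hclose s hs
    rw [Real.dist_eq, abs_sub_comm] at h1 h2
    have hρts : ε * ρ ^ β ≤ ε * |t - s| ^ β :=
      mul_le_mul_of_nonneg_left (Real.rpow_le_rpow hρ.le hts.le hβ) hε.le
    linarith [abs_sub (y n t - z t) (y n s - z s)]

section UniformConvergence

variable {ι γ α β : Type*} [TopologicalSpace α] [UniformSpace β] {p : Filter ι}
  {F : ι → α → β} {f : α → β} {s : Set α}

lemma TendstoUniformlyOn.tendsto_comp_prod_fst (h : TendstoUniformlyOn F f p s) {x : α}
    (hf : ContinuousWithinAt f s x) {q : Filter γ} {g : ι × γ → α}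
    (hg : Tendsto g (p ×ˢ q) (𝓝[s] x)) :
    Tendsto (fun i => F i.1 (g i)) (p ×ˢ q) (𝓝 (f x)) :=
  TendstoUniformlyOn.tendsto_comp (F := fun i : ι × γ => F i.1)
    (fun u hu => tendsto_fst.eventually (h u hu)) hf hg

lemma tendstoUniformlyOn_of_forall_tendsto_prod (hs : IsCompact s) (hf : ContinuousOn f s)
    (h : ∀ x ∈ s, Tendsto (fun i : ι × α => F i.1 i.2) (p ×ˢ 𝓝[s] x) (𝓝 (f x))) :
    TendstoUniformlyOn F f p s := by
  rw [← tendstoLocallyUniformlyOn_iff_tendstoUniformlyOn_of_compact hs,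
    tendstoLocallyUniformlyOn_iff_forall_tendsto]
  exact fun x hx => (((hf x hx).tendsto.comp tendsto_snd).prodMk_nhds (h x hx)).mono_right
    (nhds_le_uniformity _)

end UniformConvergence

lemma TendstoUniformlyOn.eventually_abs_le {ι : Type*} {p : Filter ι} {F : ι → ℝ → ℝ}
    {f : ℝ → ℝ} {s : Set ℝ} {M : ℝ} (h : TendstoUniformlyOn F f p s)
    (hf : ∀ u ∈ s, |f u| ≤ M) : ∀ᶠ n in p, ∀ u ∈ s, |F n u| ≤ M + 1 := by
  filter_upwards [Metric.tendstoUniformlyOn_iff.1 h 1 one_pos] with n hn u hu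
  have hclose := hn u hu
  rw [Real.dist_eq, abs_sub_comm] at hclose
  linarith [abs_sub_abs_le_abs_sub (F n u) (f u), hf u hu]

section ExitTimes

variable {δ : ℝ} {b : ℝ → ℝ}

lemma exitTimes_succ_le {k : ℕ} {t : ℝ}
    (ht : t ∈ {t : ℝ | exitTimes δ b k < t ∧ δ < |b t - b (exitTimes δ b k)|} ∪ {1}) :
    exitTimes δ b (k + 1) ≤ t := by
  refine csInf_le ⟨min (exitTimes δ b k) 1, ?_⟩ ht
  rintro u (hu | rfl)
  exacts [(min_le_left _ _).trans hu.1.le, min_le_right _ _]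

lemma exitTimes_le_one (k : ℕ) : exitTimes δ b k ≤ 1 := by
  cases k with
  | zero => exact zero_le_one
  | succ k => exact exitTimes_succ_le (Or.inr rfl)

lemma exitTimes_le_succ (k : ℕ) : exitTimes δ b k ≤ exitTimes δ b (k + 1) := by
  refine le_csInf ⟨1, Or.inr rfl⟩ ?_
  rintro u (hu | rfl)
  exacts [hu.1.le, exitTimes_le_one k]

lemma exitTimes_monotone : Monotone (exitTimes δ b) :=
  monotone_nat_of_le_succ exitTimes_le_succ

lemma exitTimes_mem_Icc (k : ℕ) : exitTimes δ b k ∈ Icc 0 1 :=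
  ⟨exitTimes_monotone (Nat.zero_le k), exitTimes_le_one k⟩

lemma exitTimes_eq_one_of_le {k m : ℕ} (hk : exitTimes δ b k = 1) (hkm : k ≤ m) :
    exitTimes δ b m = 1 :=
  (exitTimes_le_one m).antisymm (hk ▸ exitTimes_monotone hkm)

/-- Before time `1`, a continuous `b` has moved by at least `δ` at each exit time: otherwise,
by continuity, `b` would stay within `δ` of `b τₖ` slightly beyond `τₖ₊₁`, contradicting the
definition of `τₖ₊₁` as an infimum. -/
lemma le_abs_sub_exitTimes_of_lt_one (hb : ContinuousOn b (Icc 0 1)) {k : ℕ}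
    (h : exitTimes δ b (k + 1) < 1) :
    δ ≤ |b (exitTimes δ b (k + 1)) - b (exitTimes δ b k)| := by
  set τ := exitTimes δ b k
  set τ' := exitTimes δ b (k + 1)
  by_contra! hlt
  obtain ⟨θ, hθ, hcont⟩ := Metric.continuousWithinAt_iff.1 (hb τ' (exitTimes_mem_Icc _))
    (δ - |b τ' - b τ|) (sub_pos.2 hlt)
  have hne : ({t : ℝ | τ < t ∧ δ < |b t - b τ|} ∪ {1}).Nonempty := ⟨1, Or.inr rfl⟩
  obtain ⟨u, hu, hu_lt⟩ := exists_lt_of_csInf_lt hne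
    (show τ' < min 1 (τ' + θ) from lt_min h (by linarith))
  have hτ'u : τ' ≤ u := exitTimes_succ_le hu
  rcases hu with ⟨-, hδu⟩ | rfl
  · have hu_mem : u ∈ Icc (0 : ℝ) 1 :=
      ⟨(exitTimes_mem_Icc _).1.trans hτ'u, (hu_lt.trans_le (min_le_left _ _)).le⟩
    have hnear := hcont hu_mem <| by
      rw [Real.dist_eq, abs_of_nonneg (sub_nonneg.2 hτ'u)]
      linarith [min_le_right 1 (τ' + θ)]
    rw [Real.dist_eq] at hnear
    linarith [abs_sub_le (b u) (b τ') (b τ)]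
  · exact (min_le_left _ _).not_gt hu_lt

/-- Consecutive exit times before `1` are at least `η` apart. -/
lemma exitTimes_eq_one_of_modulus {η : ℝ} {K : ℕ} (hb : ContinuousOn b (Icc 0 1))
    (hη : ∀ u ∈ Icc (0 : ℝ) 1, ∀ v ∈ Icc (0 : ℝ) 1, |u - v| < η → |b u - b v| < δ)
    (hK : 1 < K * η) : exitTimes δ b K = 1 := by
  have hgap : ∀ k, exitTimes δ b (k + 1) < 1 → η ≤ exitTimes δ b (k + 1) - exitTimes δ b k := by
    intro k hk
    by_contra! hclose
    refine (hη _ (exitTimes_mem_Icc _) _ (exitTimes_mem_Icc _) ?_).not_ge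
      (le_abs_sub_exitTimes_of_lt_one hb hk)
    rwa [abs_of_nonneg (sub_nonneg.2 (exitTimes_le_succ k))]
  have hgrowth : ∀ k : ℕ, exitTimes δ b k = 1 ∨ k * η ≤ exitTimes δ b k := by
    intro k
    induction k with
    | zero => simp [exitTimes]
    | succ k ih =>
      rcases (exitTimes_le_one (k + 1)).eq_or_lt with h | h
      · exact .inl h
      · have hk := hgap k h
        rcases ih with h' | h'
        · linarith [exitTimes_le_succ (δ := δ) (b := b) k]
        · right; push_cast; linarith
  exact (hgrowth K).resolve_right fun h => by linarith [exitTimes_le_one (δ := δ) (b := b) K]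

end ExitTimes

/-- Uniform convergence to a continuous limit gives a common modulus of continuity, hence a
common bound on the number of exit times. -/
lemma exists_eventually_exitTimes_eq_one {ι : Type*} {p : Filter ι} {δ : ℝ} {A : ι → ℝ → ℝ}
    {a : ℝ → ℝ} (hδ : 0 < δ) (hA : ∀ n, ContinuousOn (A n) (Icc 0 1))
    (ha : ContinuousOn a (Icc 0 1)) (hAa : TendstoUniformlyOn A a p (Icc 0 1)) :
    ∃ K : ℕ, ∀ᶠ n in p, exitTimes δ (A n) K = 1 := by
  obtain ⟨η, hη, haη⟩ := Metric.uniformContinuousOn_iff.1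
    (isCompact_Icc.uniformContinuousOn_of_continuous ha) (δ / 2) (half_pos hδ)
  obtain ⟨K, hK⟩ := exists_nat_gt η⁻¹
  refine ⟨K, ?_⟩
  filter_upwards [Metric.tendstoUniformlyOn_iff.1 hAa (δ / 4) (by positivity)] with n hn
  refine exitTimes_eq_one_of_modulus (hA n) (fun u hu v hv huv => ?_)
    (by rwa [inv_lt_iff_one_lt_mul₀ hη] at hK)
  have h₁ := hn u hu
  have h₂ := hn v hv
  have h₃ := haη u hu v hv huv
  rw [Real.dist_eq, abs_lt] at h₁ h₂ h₃
  rw [abs_lt]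
  constructor <;> linarith

lemma exists_subseq_tendsto_exitTimes (δ : ℝ) (A : ℕ → ℝ → ℝ) :
    ∃ L : ℕ → ℝ, (∀ j, L j ∈ Icc (0 : ℝ) 1) ∧ ∃ φ : ℕ → ℕ, StrictMono φ ∧
      ∀ j, Tendsto (fun k => exitTimes δ (A (φ k)) j) atTop (𝓝 (L j)) := by
  obtain ⟨L, hL, φ, hφ, hτ⟩ := (isCompact_univ_pi fun _ : ℕ => isCompact_Icc).tendsto_subseq
    fun n => show exitTimes δ (A n) ∈ univ.pi fun _ => Icc (0 : ℝ) 1 from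
      fun j _ => exitTimes_mem_Icc j
  exact ⟨L, fun j => hL j (mem_univ j), φ, hφ, tendsto_pi_nhds.1 hτ⟩

/-- `Gmap` with the exit times replaced by arbitrary times `τ` and the series cut after `K`
terms. -/
noncomputable def stepSum (K : ℕ) (τ : ℕ → ℝ) (c y : ℝ → ℝ) (t : ℝ) : ℝ :=
  ∑ j ∈ Finset.range K, c (τ j) * (y (min t (τ (j + 1))) - y (min t (τ j)))

lemma Gmap_eq_stepSum {δ : ℝ} {a : ℝ → ℝ} (x : ℝ → ℝ) {K : ℕ} (hK : exitTimes δ a K = 1) :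
    Gmap δ a x = stepSum K (exitTimes δ a) a x := by
  funext t
  refine tsum_eq_sum fun k hk => ?_
  rw [Finset.mem_range, not_lt] at hk
  rw [exitTimes_eq_one_of_le hK hk, exitTimes_eq_one_of_le hK (hk.trans k.le_succ), sub_self,
    mul_zero]

lemma HolderWithOn.abs_sub_min_le {C α : ℝ} {y : ℝ → ℝ} (hy : HolderWithOn C α y) (hα : 0 ≤ α)
    {s t u : ℝ} (hs : s ∈ Icc (0 : ℝ) 1) (ht : t ∈ Icc (0 : ℝ) 1) (hu : u ∈ Icc (0 : ℝ) 1) :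
    |y (min t u) - y (min s u)| ≤ C * |t - s| ^ α := by
  have hmin : |min t u - min s u| ≤ |t - s| := by
    simpa using abs_min_sub_min_le_max t u s u
  refine (hy _ ⟨le_min hs.1 hu.1, (min_le_left _ _).trans hs.2⟩ _
    ⟨le_min ht.1 hu.1, (min_le_left _ _).trans ht.2⟩).trans ?_
  exact mul_le_mul_of_nonneg_left (Real.rpow_le_rpow (abs_nonneg _) hmin hα) hy.nonneg

lemma holderWithOn_stepSum {K : ℕ} {τ : ℕ → ℝ} {c y : ℝ → ℝ} {M C α : ℝ}
    (hτ : ∀ j, τ j ∈ Icc (0 : ℝ) 1) (hc : ∀ j, |c (τ j)| ≤ M) (hy : HolderWithOn C α y)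
    (hα : 0 ≤ α) : HolderWithOn (K * (2 * M * C)) α (stepSum K τ c y) := by
  intro s hs t ht
  have hterm : ∀ j ∈ Finset.range K,
      |c (τ j) * ((y (min t (τ (j + 1))) - y (min s (τ (j + 1))))
        - (y (min t (τ j)) - y (min s (τ j))))| ≤ 2 * M * C * |t - s| ^ α := by
    intro j _
    have hinc := abs_sub
      (y (min t (τ (j + 1))) - y (min s (τ (j + 1)))) (y (min t (τ j)) - y (min s (τ j)))
    have hinc' := hinc.trans
      (add_le_add (hy.abs_sub_min_le hα hs ht (hτ _)) (hy.abs_sub_min_le hα hs ht (hτ _)))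
    rw [abs_mul]
    refine (mul_le_mul (hc j) hinc' (abs_nonneg _) ((abs_nonneg _).trans (hc j))).trans_eq ?_
    ring
  calc |stepSum K τ c y t - stepSum K τ c y s|
      = |∑ j ∈ Finset.range K, c (τ j) * ((y (min t (τ (j + 1))) - y (min s (τ (j + 1))))
          - (y (min t (τ j)) - y (min s (τ j))))| := by
        rw [stepSum, stepSum, ← Finset.sum_sub_distrib]
        congr 1
        exact Finset.sum_congr rfl fun j _ => by ring
    _ ≤ K * (2 * M * C) * |t - s| ^ α := by
        refine (Finset.abs_sum_le_sum_abs _ _).trans ?_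
        simpa [mul_assoc] using Finset.sum_le_card_nsmul _ _ _ hterm

lemma continuousOn_stepSum {K : ℕ} {τ : ℕ → ℝ} {c y : ℝ → ℝ} (hτ : ∀ j, τ j ∈ Icc (0 : ℝ) 1)
    (hy : ContinuousOn y (Icc 0 1)) : ContinuousOn (stepSum K τ c y) (Icc 0 1) := by
  have hmin : ∀ j, ContinuousOn (fun t => y (min t (τ j))) (Icc 0 1) := fun j =>
    hy.comp (continuous_id.min continuous_const).continuousOn fun t ht => min_rec' _ ht (hτ j)
  exact continuousOn_finsetSum _ fun j _ => continuousOn_const.mul ((hmin (j + 1)).sub (hmin j))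

lemma tendstoUniformlyOn_stepSum {ι : Type*} {p : Filter ι} {K : ℕ} {τ' : ι → ℕ → ℝ}
    {τ : ℕ → ℝ} {c' y' : ι → ℝ → ℝ} {c y : ℝ → ℝ} (hτ' : ∀ n j, τ' n j ∈ Icc (0 : ℝ) 1)
    (hτ : ∀ j, τ j ∈ Icc (0 : ℝ) 1) (hττ : ∀ j, Tendsto (fun n => τ' n j) p (𝓝 (τ j)))
    (hc' : TendstoUniformlyOn c' c p (Icc 0 1)) (hc : ContinuousOn c (Icc 0 1))
    (hy' : TendstoUniformlyOn y' y p (Icc 0 1)) (hy : ContinuousOn y (Icc 0 1)) :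
    TendstoUniformlyOn (fun n => stepSum K (τ' n) (c' n) (y' n)) (stepSum K τ c y) p
      (Icc 0 1) := by
  refine tendstoUniformlyOn_of_forall_tendsto_prod isCompact_Icc (continuousOn_stepSum hτ hy)
    fun t₀ ht₀ => ?_
  have hcoef : ∀ j, Tendsto (fun i : ι × ℝ => c' i.1 (τ' i.1 j)) (p ×ˢ 𝓝[Icc 0 1] t₀)
      (𝓝 (c (τ j))) := fun j =>
    hc'.tendsto_comp_prod_fst (hc _ (hτ j)) <| tendsto_nhdsWithin_iff.2
      ⟨(hττ j).comp tendsto_fst, .of_forall fun i => hτ' i.1 j⟩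
  have hinc : ∀ j, Tendsto (fun i : ι × ℝ => y' i.1 (min i.2 (τ' i.1 j))) (p ×ˢ 𝓝[Icc 0 1] t₀)
      (𝓝 (y (min t₀ (τ j)))) := fun j =>
    hy'.tendsto_comp_prod_fst (hy _ (min_rec' _ ht₀ (hτ j))) <| tendsto_nhdsWithin_iff.2
      ⟨(tendsto_snd.mono_right nhdsWithin_le_nhds).min ((hττ j).comp tendsto_fst),
        (tendsto_snd.eventually self_mem_nhdsWithin).mono fun i hi => min_rec' _ hi (hτ' i.1 j)⟩
  exact tendsto_finsetSum _ fun j _ => (hcoef j).mul ((hinc (j + 1)).sub (hinc j))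

theorem Gmap_almostCompact_general (α β δ : ℝ) (hβ0 : 0 < β) (hβα : β < α)
    (hδ : 0 < δ)
    (A : ℕ → ℝ → ℝ) (a : ℝ → ℝ) (X : ℕ → ℝ → ℝ) (x : ℝ → ℝ)
    (hA : ∀ n, ContinuousOn (A n) (Icc 0 1)) (ha : ContinuousOn a (Icc 0 1))
    (hAconv : TendstoUniformlyOn A a atTop (Icc 0 1))
    (hx : MemC0Holder α x)
    (hXconv : TendstoHolder α X x) :
    ∃ φ : ℕ → ℕ, StrictMono φ ∧ ∃ z : ℝ → ℝ,
      MemC0Holder β z ∧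
      TendstoHolder β (fun k => Gmap δ (A (φ k)) (X (φ k))) z := by
  have hα : 0 < α := hβ0.trans hβα
  obtain ⟨C, hxC⟩ := hx.1
  obtain ⟨M, haM⟩ := isCompact_Icc.exists_bound_of_continuousOn ha
  simp only [Real.norm_eq_abs] at haM
  obtain ⟨K, hK⟩ := exists_eventually_exitTimes_eq_one hδ hA ha hAconv
  obtain ⟨L, hL, φ, hφ, hτ⟩ := exists_subseq_tendsto_exitTimes δ A
  have hφt := hφ.tendsto_atTop
  have hsub : ∀ᶠ k in atTop, exitTimes δ (A (φ k)) K = 1 ∧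
      (∀ u ∈ Icc (0 : ℝ) 1, |A (φ k) u| ≤ M + 1) ∧ HolderWithOn (1 + C) α (X (φ k)) :=
    hφt.eventually (hK.and ((hAconv.eventually_abs_le haM).and
      (hXconv.eventually_holderWithOn hxC)))
  have hG : TendstoUniformlyOn (fun k => Gmap δ (A (φ k)) (X (φ k))) (stepSum K L a x) atTop
      (Icc 0 1) :=
    (tendstoUniformlyOn_stepSum (fun k => exitTimes_mem_Icc) hL hτ
      (fun u hu => hφt.eventually (hAconv u hu)) ha
      (fun u hu => hφt.eventually (hXconv.tendstoUniformlyOn hα.le u hu))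
      (hxC.continuousOn hα)).congr
      (hsub.mono fun k hk => (Gmap_eq_stepSum _ hk.1).symm ▸ eqOn_refl _ _)
  have hGH : ∀ᶠ k in atTop, HolderWithOn (K * (2 * (M + 1) * (1 + C))) α
      (Gmap δ (A (φ k)) (X (φ k))) := hsub.mono fun k ⟨hKk, hAk, hXk⟩ => by
    rw [Gmap_eq_stepSum _ hKk]
    exact holderWithOn_stepSum exitTimes_mem_Icc (fun j => hAk _ (exitTimes_mem_Icc j)) hXk hα.le
  have hzH : HolderWithOn (K * (2 * (M + 1) * (1 + C))) α (stepSum K L a x) :=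
    holderWithOn_stepSum hL (fun j => by linarith [haM _ (hL j)])
      (hxC.mono (by linarith)) hα.le
  exact ⟨φ, hφ, _, .of_holderWithOn hzH hβ0.le hβα,
    tendstoHolder_of_tendstoUniformlyOn hβ0.le hβα hGH hzH hG⟩

/-- The map `G_δ : C([0,1]) × C_0^{α-Hld} → C_0^{β-Hld}` (`0 < β < α ≤ 1`) is almost
compact: along a subsequence of any convergent sequence `(a n, x n) → (a, x)`,
`G_δ(a n, x n)` converges in `β`-Hölder norm to some `z ∈ C_0^{β-Hld}`. -/
theorem Gmap_almostCompact (α β δ : ℝ) (hβ0 : 0 < β) (hβα : β < α) (hα1 : α ≤ 1)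
    (hδ : 0 < δ)
    (A : ℕ → ℝ → ℝ) (a : ℝ → ℝ) (X : ℕ → ℝ → ℝ) (x : ℝ → ℝ)
    (hA : ∀ n, ContinuousOn (A n) (Icc 0 1)) (ha : ContinuousOn a (Icc 0 1))
    (hAconv : TendstoUniformlyOn A a atTop (Icc 0 1))
    (hX : ∀ n, MemC0Holder α (X n)) (hx : MemC0Holder α x)
    (hXconv : TendstoHolder α X x) :
    ∃ φ : ℕ → ℕ, StrictMono φ ∧ ∃ z : ℝ → ℝ,
      MemC0Holder β z ∧
      TendstoHolder β (fun k => Gmap δ (A (φ k)) (X (φ k))) z :=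
  Gmap_almostCompact_general α β δ hβ0 hβα hδ A a X x hA ha hAconv hx hXconv
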